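/- arXiv:2605.11289 — 6 statements merged into one kernel-verified Lean document; each statement's English description precedes it below -/
import Mathlib

section
/- Let Θ = {θ_1 < … < θ_d} be an ordered finite support and let Π_C^Θ denote the Cramér (linear-interpolation) categorical projection onto Θ. For every probability measure η on ℝ with finite second moment and every c ∈ ℝ, projecting the translate (τ_c)_#η onto the shifted support Θ_c := {θ + c : θ ∈ Θ} yields the translate by c of the projection of η onto Θ: Π_C^{Θ_c}((τ_c)_#η) = (τ_c)_#(Π_C^Θ η). -/
open MeasureTheory
open scoped ENNReal NNReal

/-- Hat (linear-interpolation with edge clipping) function of the uniform grid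
`θ_k = θ0 + k·Δ`, `k = 0, …, d−1`, evaluated at `x`. -/
noncomputable def hatFn (θ0 Δ : ℝ) (d k : ℕ) (x : ℝ) : ℝ :=
  if k = 0 then min 1 (max 0 ((θ0 + Δ - x) / Δ))
  else if k = d - 1 then min 1 (max 0 ((x - (θ0 + ((d : ℝ) - 2) * Δ)) / Δ))
  else max 0 (1 - |x - (θ0 + (k : ℝ) * Δ)| / Δ)

/-- The Cramér (linear-interpolation) categorical projection of a measure `η`
onto the uniform grid `θ_k = θ0 + k·Δ`, `k = 0, …, d−1`. -/
noncomputable def catProj (θ0 Δ : ℝ) (d : ℕ) (η : Measure ℝ) : Measure ℝ :=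
  ∑ k ∈ Finset.range d,
    ENNReal.ofReal (∫ x, hatFn θ0 Δ d k x ∂η) • Measure.dirac (θ0 + (k : ℝ) * Δ)

theorem MeasureTheory.Measure.map_sum_smul_dirac {α β ι : Type*}
    [MeasurableSpace α] [MeasurableSpace β] {f : α → β} (hf : Measurable f) (s : Finset ι) (w : ι → ℝ≥0∞) (a : ι → α) :
    (∑ i ∈ s, w i • dirac (a i)).map f = ∑ i ∈ s, w i • dirac (f (a i)) := by
  rw [← mapₗ_apply_of_measurable hf, _root_.map_sum]
  simp only [mapₗ_apply_of_measurable hf, Measure.map_smul, map_dirac' hf]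

theorem hatFn_add_const (θ0 Δ : ℝ) (d k : ℕ) (c x : ℝ) :
    hatFn (θ0 + c) Δ d k (x + c) = hatFn θ0 Δ d k x := by
  simp only [hatFn, add_right_comm θ0 c, add_sub_add_right_eq_sub]

theorem continuous_hatFn (θ0 Δ : ℝ) (d k : ℕ) : Continuous (hatFn θ0 Δ d k) := by
  unfold hatFn
  split_ifs <;> fun_prop

theorem integral_hatFn_map_add_const (θ0 Δ : ℝ) (d k : ℕ) (η : Measure ℝ) (c : ℝ) :
    ∫ x, hatFn (θ0 + c) Δ d k x ∂η.map (· + c) = ∫ x, hatFn θ0 Δ d k x ∂η := by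
  rw [integral_map (measurable_add_const c).aemeasurable
    (continuous_hatFn _ Δ d k).aestronglyMeasurable]
  simp only [hatFn_add_const]

theorem catProj_shift_equivariant_general
    (θ0 Δ : ℝ) (d : ℕ)
    (η : Measure ℝ)
    (c : ℝ) :
    catProj (θ0 + c) Δ d (Measure.map (· + c) η)
      = Measure.map (· + c) (catProj θ0 Δ d η) := by
  unfold catProj
  rw [Measure.map_sum_smul_dirac (measurable_add_const c)]
  refine Finset.sum_congr rfl fun k _ => ?_
  rw [integral_hatFn_map_add_const, add_right_comm]

/-- projection shift-equivariance. Projecting the translate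
`(τ_c)_# η` onto the `c`-shifted support equals the translate by `c` of the
projection of `η` onto the original support. -/
theorem catProj_shift_equivariant
    (θ0 Δ : ℝ) (hΔ : 0 < Δ) (d : ℕ) (hd : 2 ≤ d)
    (η : Measure ℝ) [IsProbabilityMeasure η] (hmom : MemLp id 2 η)
    (c : ℝ) :
    catProj (θ0 + c) Δ d (Measure.map (· + c) η)
      = Measure.map (· + c) (catProj θ0 Δ d η) :=
  catProj_shift_equivariant_general θ0 Δ d η c
end

section
/- Convolution with a fixed probability measure is non-expansive in the Cramér metric: for any probability measures η, ζ on ℝ with finite second moment and any probability measure ν, ℓ_C(ν ∗ η, ν ∗ ζ) ≤ ℓ_C(η, ζ). -/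
open MeasureTheory
open scoped ENNReal NNReal

/-- The cumulative distribution function of a measure on ℝ. -/
noncomputable def cdfFn (μ : Measure ℝ) (x : ℝ) : ℝ := (μ (Set.Iic x)).toReal

/-- The Cramér distance: the L² distance between CDFs. -/
noncomputable def cramerDist (μ ν : Measure ℝ) : ℝ :=
  Real.sqrt (∫ x, (cdfFn μ x - cdfFn ν x) ^ 2)

section Aux

lemma cdfFn_mono (μ : Measure ℝ) [IsFiniteMeasure μ] : Monotone (cdfFn μ) := by
  intro x y h
  exact ENNReal.toReal_mono (measure_ne_top _ _) (measure_mono (Set.Iic_subset_Iic.2 h))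

lemma measurable_cdfFn (μ : Measure ℝ) [IsFiniteMeasure μ] : Measurable (cdfFn μ) :=
  (cdfFn_mono μ).measurable

lemma cdfFn_nonneg (μ : Measure ℝ) (x : ℝ) : 0 ≤ cdfFn μ x := ENNReal.toReal_nonneg

lemma cdfFn_le_one (μ : Measure ℝ) [IsProbabilityMeasure μ] (x : ℝ) : cdfFn μ x ≤ 1 := by
  have : μ (Set.Iic x) ≤ 1 := prob_le_one
  simpa [cdfFn] using ENNReal.toReal_mono (by simp) this

/-- Jensen for the square on a probability measure. -/
lemma sq_integral_le (ν : Measure ℝ) [IsProbabilityMeasure ν] {f : ℝ → ℝ}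
    (hf : Integrable f ν) (hf2 : Integrable (fun s => f s ^ 2) ν) :
    (∫ s, f s ∂ν) ^ 2 ≤ ∫ s, f s ^ 2 ∂ν := by
  set c := ∫ s, f s ∂ν with hc
  have h0 : 0 ≤ ∫ s, (f s - c) ^ 2 ∂ν := integral_nonneg fun s => sq_nonneg _
  have hexp : ∫ s, (f s - c) ^ 2 ∂ν = (∫ s, f s ^ 2 ∂ν) - c ^ 2 := by
    have h1 : ∀ s, (f s - c) ^ 2 = f s ^ 2 - (2 * c) * f s + c ^ 2 := fun s => by ring
    simp_rw [h1]
    have hcm : Integrable (fun s => 2 * c * f s) ν := hf.const_mul (2 * c)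
    have hsub : Integrable (fun s => f s ^ 2 - 2 * c * f s) ν := hf2.sub hcm
    rw [integral_add hsub (integrable_const _), integral_sub hf2 hcm,
      MeasureTheory.integral_const_mul, integral_const]
    simp only [measure_univ, probReal_univ, ENNReal.toReal_one, smul_eq_mul, one_mul, ← hc]
    ring
  linarith

/-- CDF of a convolution. -/
lemma cdfFn_conv (ν μ : Measure ℝ) [IsProbabilityMeasure ν] [IsProbabilityMeasure μ] (x : ℝ) :
    cdfFn (ν.conv μ) x = ∫ s, cdfFn μ (x - s) ∂ν := by
  have hmeas : Measurable fun s : ℝ => μ (Set.Iic (x - s)) := by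
    have h1 : Monotone fun y : ℝ => μ (Set.Iic y) := fun a b h =>
      measure_mono (Set.Iic_subset_Iic.2 h)
    exact h1.measurable.comp (measurable_const.sub measurable_id)
  have key : (ν.conv μ) (Set.Iic x) = ∫⁻ s, μ (Set.Iic (x - s)) ∂ν := by
    rw [Measure.conv, Measure.map_apply (by fun_prop) measurableSet_Iic,
      Measure.prod_apply (measurable_add measurableSet_Iic)]
    congr 1
    ext s
    congr 1
    ext t
    simp [Set.Iic]
    constructor <;> intro h <;> linarith
  rw [cdfFn, key, ← integral_toReal hmeas.aemeasurable]
  · rfl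
  · exact ae_of_all _ fun s => lt_of_le_of_lt prob_le_one (by norm_num)

end Aux

section Tail

lemma measurable_measure_Iic (μ : Measure ℝ) : Measurable fun y : ℝ => μ (Set.Iic y) := by
  have h : Monotone fun y : ℝ => μ (Set.Iic y) := fun a b h =>
    measure_mono (Set.Iic_subset_Iic.2 h)
  exact h.measurable

lemma one_sub_cdfFn (μ : Measure ℝ) [IsProbabilityMeasure μ] (x : ℝ) :
    1 - cdfFn μ x = (μ (Set.Ioi x)).toReal := by
  have h : μ (Set.Iic x) + μ (Set.Ioi x) = 1 := by
    have := measure_add_measure_compl (μ := μ) (measurableSet_Iic (a := x))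
    simpa [Set.compl_Iic] using this
  have h2 := congrArg ENNReal.toReal h
  rw [ENNReal.toReal_add (measure_ne_top _ _) (measure_ne_top _ _)] at h2
  simp only [ENNReal.toReal_one] at h2
  rw [cdfFn]; linarith

lemma tail_lintegral (μ : Measure ℝ) [IsProbabilityMeasure μ] (hμ : MemLp id 2 μ) :
    ∫⁻ x, ENNReal.ofReal |cdfFn μ x - Set.indicator (Set.Ici (0:ℝ)) 1 x| < ⊤ := by
  have hμ1 : MemLp id 1 μ := hμ.mono_exponent (by norm_num)
  have habs : ∫⁻ a, ENNReal.ofReal |a| ∂μ < ⊤ := by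
    have := hμ1.2
    rw [eLpNorm_one_eq_lintegral_enorm] at this
    simpa [← Real.enorm_eq_ofReal_abs] using this
  have hlayer : ∫⁻ a, ENNReal.ofReal |a| ∂μ
      = ∫⁻ t in Set.Ioi 0, μ {a : ℝ | t ≤ |a|} :=
    lintegral_eq_lintegral_meas_le μ (ae_of_all _ abs_nonneg)
      measurable_abs.aemeasurable (f := fun a : ℝ => |a|)
  set T := ∫⁻ t in Set.Ioi (0:ℝ), μ {a : ℝ | t ≤ |a|} with hT
  have hTfin : T < ⊤ := hlayer ▸ habs
  have hsplit : ∫⁻ x, ENNReal.ofReal |cdfFn μ x - Set.indicator (Set.Ici (0:ℝ)) 1 x|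
      = (∫⁻ x in Set.Iio 0, μ (Set.Iic x)) + ∫⁻ x in Set.Ici 0, μ (Set.Ioi x) := by
    rw [← lintegral_add_compl
      (fun x => ENNReal.ofReal |cdfFn μ x - Set.indicator (Set.Ici (0:ℝ)) 1 x|)
      (measurableSet_Iio (a := (0:ℝ))), Set.compl_Iio]
    congr 1
    · refine setLIntegral_congr_fun measurableSet_Iio (fun x hx => ?_)
      rw [Set.indicator_of_notMem (by simpa using hx), sub_zero,
        abs_of_nonneg (cdfFn_nonneg μ x), cdfFn, ENNReal.ofReal_toReal (measure_ne_top _ _)]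
    · refine setLIntegral_congr_fun measurableSet_Ici (fun x hx => ?_)
      rw [Set.indicator_of_mem hx, Pi.one_apply, abs_sub_comm,
        abs_of_nonneg (by linarith [cdfFn_le_one μ x]), one_sub_cdfFn,
        ENNReal.ofReal_toReal (measure_ne_top _ _)]
  rw [hsplit]
  have hA : (∫⁻ x in Set.Iio (0:ℝ), μ (Set.Iic x)) ≤ T := by
    have hmp : (volume : Measure ℝ).restrict (Set.Iio 0)
        = Measure.map Neg.neg ((volume : Measure ℝ).restrict (Set.Ioi 0)) := by
      have h1 : Measure.map Neg.neg (volume : Measure ℝ) = volume :=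
        (Measure.measurePreserving_neg (volume : Measure ℝ)).map_eq
      conv_lhs => rw [← h1]
      rw [Measure.restrict_map measurable_neg measurableSet_Iio]
      congr 1
      ext t
      simp
    rw [hmp, lintegral_map (measurable_measure_Iic μ) measurable_neg]
    refine lintegral_mono_ae ?_
    rw [ae_restrict_iff' measurableSet_Ioi]
    refine ae_of_all _ fun t ht => measure_mono fun a ha => ?_
    have ha' : a ≤ -t := ha
    have ht' : (0:ℝ) < t := ht
    exact le_trans (by linarith) (neg_le_abs a)
  have hB : (∫⁻ x in Set.Ici (0:ℝ), μ (Set.Ioi x)) ≤ T := by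
    have hEq : (volume : Measure ℝ).restrict (Set.Ici (0:ℝ))
        = (volume : Measure ℝ).restrict (Set.Ioi 0) :=
      Measure.restrict_congr_set Ioi_ae_eq_Ici.symm
    rw [hEq]
    refine lintegral_mono_ae ?_
    rw [ae_restrict_iff' measurableSet_Ioi]
    refine ae_of_all _ fun x hx => measure_mono fun a ha => ?_
    have ha' : x < a := ha
    exact le_trans ha'.le (le_abs_self a)
  calc (∫⁻ x in Set.Iio (0:ℝ), μ (Set.Iic x)) + ∫⁻ x in Set.Ici 0, μ (Set.Ioi x)
      ≤ T + T := add_le_add hA hB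
    _ < ⊤ := ENNReal.add_lt_top.2 ⟨hTfin, hTfin⟩

end Tail

/-- convolution with a fixed probability measure is non-expansive
in the Cramér metric. -/
theorem cramer_conv_nonexpansive
    (η ζ ν : Measure ℝ)
    [IsProbabilityMeasure η] [IsProbabilityMeasure ζ] [IsProbabilityMeasure ν]
    (hη : MemLp id 2 η) (hζ : MemLp id 2 ζ) :
    cramerDist (ν.conv η) (ν.conv ζ) ≤ cramerDist η ζ := by
  set g : ℝ → ℝ := fun x => cdfFn η x - cdfFn ζ x with hg
  set D : ℝ → ℝ := fun x => cdfFn (ν.conv η) x - cdfFn (ν.conv ζ) x with hD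
  have hgmeas : Measurable g := (measurable_cdfFn η).sub (measurable_cdfFn ζ)
  have hDmeas : Measurable D := (measurable_cdfFn _).sub (measurable_cdfFn _)
  have hgabs : ∀ x, |g x| ≤ 1 := by
    intro x
    rw [abs_sub_le_iff]
    constructor <;>
      linarith [cdfFn_nonneg η x, cdfFn_nonneg ζ x, cdfFn_le_one η x, cdfFn_le_one ζ x]
  have hgsq : ∀ x, g x ^ 2 ≤ |g x| := by
    intro x
    have h := hgabs x
    nlinarith [abs_nonneg (g x), sq_abs (g x)]
  -- finiteness of the g² lintegral
  have hgfin : ∫⁻ x, ENNReal.ofReal (g x ^ 2) < ⊤ := by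
    set H : ℝ → ℝ := Set.indicator (Set.Ici (0:ℝ)) 1 with hH
    have hHmeas : Measurable H := measurable_const.indicator measurableSet_Ici
    have hb : ∀ x, g x ^ 2 ≤ |cdfFn η x - H x| + |cdfFn ζ x - H x| := by
      intro x
      refine le_trans (hgsq x) ?_
      calc |g x| = |(cdfFn η x - H x) - (cdfFn ζ x - H x)| := by rw [hg]; ring_nf
        _ ≤ |cdfFn η x - H x| + |cdfFn ζ x - H x| := abs_sub _ _
    calc ∫⁻ x, ENNReal.ofReal (g x ^ 2)
        ≤ ∫⁻ x, (ENNReal.ofReal |cdfFn η x - H x| + ENNReal.ofReal |cdfFn ζ x - H x|) := by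
          refine lintegral_mono fun x => ?_
          exact le_trans (ENNReal.ofReal_le_ofReal (hb x)) ENNReal.ofReal_add_le
      _ = (∫⁻ x, ENNReal.ofReal |cdfFn η x - H x|)
            + ∫⁻ x, ENNReal.ofReal |cdfFn ζ x - H x| := by
          exact lintegral_add_left (((measurable_cdfFn η).sub hHmeas).abs.ennreal_ofReal) _
      _ < ⊤ := ENNReal.add_lt_top.2 ⟨tail_lintegral η hη, tail_lintegral ζ hζ⟩
  -- pointwise Jensen bound
  have hkey : ∀ x, ENNReal.ofReal (D x ^ 2) ≤ ∫⁻ s, ENNReal.ofReal (g (x - s) ^ 2) ∂ν := by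
    intro x
    have hmg : Measurable fun s => g (x - s) := hgmeas.comp (measurable_const.sub measurable_id)
    have hint : Integrable (fun s => g (x - s)) ν := by
      refine (integrable_const (1:ℝ)).mono' hmg.aestronglyMeasurable (ae_of_all _ fun s => ?_)
      simpa using hgabs (x - s)
    have hint2 : Integrable (fun s => g (x - s) ^ 2) ν := by
      refine (integrable_const (1:ℝ)).mono' (hmg.pow_const 2).aestronglyMeasurable
        (ae_of_all _ fun s => ?_)
      have h1 := hgsq (x - s)
      have h2 := hgabs (x - s)
      simp only [Real.norm_eq_abs, abs_pow, sq_abs] ; nlinarith [sq_nonneg (g (x - s))]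
    have hintη : Integrable (fun s => cdfFn η (x - s)) ν := by
      refine (integrable_const (1:ℝ)).mono'
        (((measurable_cdfFn η).comp (measurable_const.sub measurable_id)).aestronglyMeasurable)
        (ae_of_all _ fun s => ?_)
      simp only [Real.norm_eq_abs]
      rw [abs_of_nonneg (cdfFn_nonneg _ _)]
      exact cdfFn_le_one _ _
    have hintζ : Integrable (fun s => cdfFn ζ (x - s)) ν := by
      refine (integrable_const (1:ℝ)).mono'
        (((measurable_cdfFn ζ).comp (measurable_const.sub measurable_id)).aestronglyMeasurable)
        (ae_of_all _ fun s => ?_)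
      simp only [Real.norm_eq_abs]
      rw [abs_of_nonneg (cdfFn_nonneg _ _)]
      exact cdfFn_le_one _ _
    have hDx : D x = ∫ s, g (x - s) ∂ν := by
      rw [hD]
      simp only
      rw [cdfFn_conv ν η x, cdfFn_conv ν ζ x, ← integral_sub hintη hintζ]
    rw [hDx]
    refine le_trans (ENNReal.ofReal_le_ofReal (sq_integral_le ν hint hint2)) ?_
    rw [ofReal_integral_eq_lintegral_ofReal hint2 (ae_of_all _ fun s => sq_nonneg _)]
  -- Fubini and translation invariance
  have hswap : (∫⁻ x, ∫⁻ s, ENNReal.ofReal (g (x - s) ^ 2) ∂ν)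
      = ∫⁻ x, ENNReal.ofReal (g x ^ 2) := by
    rw [lintegral_lintegral_swap
      (((hgmeas.comp (measurable_fst.sub measurable_snd)).pow_const 2).ennreal_ofReal).aemeasurable]
    simp_rw [lintegral_sub_right_eq_self (fun x => ENNReal.ofReal (g x ^ 2)) _]
    rw [lintegral_const, measure_univ, mul_one]
  have hle : ∫⁻ x, ENNReal.ofReal (D x ^ 2) ≤ ∫⁻ x, ENNReal.ofReal (g x ^ 2) := by
    refine le_trans (lintegral_mono hkey) (le_of_eq hswap)
  -- conclude
  unfold cramerDist
  apply Real.sqrt_le_sqrt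
  rw [integral_eq_lintegral_of_nonneg_ae (ae_of_all _ fun x => sq_nonneg _)
      (hDmeas.pow_const 2).aestronglyMeasurable,
    integral_eq_lintegral_of_nonneg_ae (ae_of_all _ fun x => sq_nonneg _)
      (hgmeas.pow_const 2).aestronglyMeasurable]
  exact ENNReal.toReal_mono hgfin.ne hle
end

section
/- The categorical shift map L_b on the simplex is (Δ^{-1/2})-Lipschitz in the shift: for the single-atom coefficients e_m, the map t ↦ L_t e_m (project the Dirac mass at θ_m + t back onto the grid Θ with stride Δ by linear interpolation and edge clipping) satisfies ℓ^Θ_C(L_b e_m, L_{b'} e_m) ≤ Δ^{−1/2}|b − b'| for all b, b' ∈ ℝ. More generally, for all p, q ∈ Δ_d and b, b' ∈ ℝ, ℓ^Θ_C(L_b p, L_{b'} q) ≤ ℓ^Θ_C(p, q) + Δ^{−1/2}|b − b'|. -/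
/-- Cumulative mass `F_u(θ_k) = Σ_{j ≤ k} u_j`. -/
def cumul {d : ℕ} (u : Fin d → ℝ) (k : ℕ) : ℝ :=
  ∑ j : Fin d, if (j : ℕ) ≤ k then u j else 0

/-- Coordinate Cramér metric on `Δ_d` for a uniform grid with stride `Δ`. -/
noncomputable def ellTheta (Δ : ℝ) {d : ℕ} (u v : Fin d → ℝ) : ℝ :=
  Real.sqrt (Δ * ∑ k ∈ Finset.range (d - 1), (cumul u k - cumul v k) ^ 2)

/-- The categorical shift map `L_t`: translate the categorical law with
coefficients `p` by `t` and project back onto the grid by linear interpolation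
with edge clipping. -/
noncomputable def shiftMap (θ0 Δ : ℝ) (d : ℕ) (t : ℝ) (p : Fin d → ℝ) : Fin d → ℝ :=
  fun k => ∑ m : Fin d, p m * hatFn θ0 Δ d k (θ0 + (m : ℝ) * Δ + t)

/-- The single-atom coefficient vector `e_m`. -/
def atom {d : ℕ} (m : Fin d) : Fin d → ℝ := fun j => if j = m then 1 else 0

open Finset

/-!
Write `s = t / Δ`. Below the last grid point the hat functions telescope, so the CDF of `L_t e_m`
at `θ_k` is the clipped ramp `clip (k + 1 - m - s)`, and `F_{L_t p} = ∑ₘ pₘ F_{L_t e_m}`.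

Moving `s` moves each ramp monotonically with total variation `|s - s'|`, so its `ℓ²` norm moves
by at most `|s - s'|`; this is the atom bound, and convexity of the norm extends it to
`ℓ^Θ_C(L_b p, L_{b'} p)`.

For a fixed shift, summation by parts gives `F_{L_t p} - F_{L_t q} = W (F_p - F_q)` when `p` and `q`
have equal mass, where `W k i = F_{L_t e_i}(θ_k) - F_{L_t e_{i+1}}(θ_k) ≥ 0` has row and column sums
at most `1` (both telescope). By the Schur test `W` is an `ℓ²` contraction, so `L_t` is
non-expansive, and the triangle inequality combines the two bounds.
-/

noncomputable def clip (a : ℝ) : ℝ := min 1 (max 0 a)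

lemma clip_nonneg (a : ℝ) : 0 ≤ clip a := le_min zero_le_one (le_max_left 0 a)

lemma clip_le_one (a : ℝ) : clip a ≤ 1 := min_le_left _ _

lemma clip_mono : Monotone clip := fun _ _ h => min_le_min le_rfl (max_le_max le_rfl h)

lemma clip_add_one_sub_clip (a : ℝ) : clip (a + 1) - clip a = max 0 (1 - |a|) := by
  rcases abs_cases a with ⟨h1, h2⟩ | ⟨h1, h2⟩ <;>
    simp only [clip, min_def, max_def, h1] <;> split_ifs <;> linarith

lemma clip_sub_clip_eq {s s' : ℝ} (h : s ≤ s') (x : ℝ) :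
    clip (x - s) - clip (x - s') = max s (min s' x) - max s (min s' (x - 1)) := by
  simp only [clip, min_def, max_def]
  split_ifs <;> linarith

/-- The value `F_{L_t e_m}(θ_k)` for the shift `t = s Δ`, with `θ_k` indexed from `0`. -/
noncomputable def shiftedAtomCdf (s : ℝ) (m k : ℕ) : ℝ := clip (k + 1 - m - s)

lemma shiftedAtomCdf_succ_le (s : ℝ) (m k : ℕ) :
    shiftedAtomCdf s (m + 1) k ≤ shiftedAtomCdf s m k :=
  clip_mono (by push_cast; linarith)

lemma sum_shiftedAtomCdf_sub_le {s s' : ℝ} (h : s ≤ s') (m n : ℕ) :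
    ∑ k ∈ range n, (shiftedAtomCdf s m k - shiftedAtomCdf s' m k) ≤ s' - s := by
  set f : ℕ → ℝ := fun j => max s (min s' ((j : ℝ) - m))
  have hterm : ∀ k, shiftedAtomCdf s m k - shiftedAtomCdf s' m k = f (k + 1) - f k := by
    intro k
    rw [shiftedAtomCdf, shiftedAtomCdf, clip_sub_clip_eq h]
    simp only [f]
    push_cast
    ring_nf
  rw [sum_congr rfl fun k _ => hterm k, sum_range_sub]
  linarith [max_le h (min_le_left s' ((n : ℝ) - m)),
    le_max_left s (min s' ((0 : ℕ) - (m : ℝ)))]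

lemma sum_sq_shiftedAtomCdf_sub_le (s s' : ℝ) (m n : ℕ) :
    ∑ k ∈ range n, (shiftedAtomCdf s m k - shiftedAtomCdf s' m k) ^ 2 ≤ (s - s') ^ 2 := by
  wlog h : s ≤ s' generalizing s s'
  · simpa only [sub_sq_comm] using this s' s (le_of_not_ge h)
  have hnonneg : ∀ k ∈ range n, 0 ≤ shiftedAtomCdf s m k - shiftedAtomCdf s' m k :=
    fun k _ => sub_nonneg.2 (clip_mono (by linarith))
  calc ∑ k ∈ range n, (shiftedAtomCdf s m k - shiftedAtomCdf s' m k) ^ 2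
      ≤ (∑ k ∈ range n, (shiftedAtomCdf s m k - shiftedAtomCdf s' m k)) ^ 2 :=
        sum_sq_le_sq_sum_of_nonneg hnonneg
    _ ≤ (s' - s) ^ 2 :=
        pow_le_pow_left₀ (sum_nonneg hnonneg) (sum_shiftedAtomCdf_sub_le h m n) 2
    _ = (s - s') ^ 2 := sub_sq_comm _ _

lemma sum_atoms_shiftedAtomCdf_sub_succ_le_one (s : ℝ) (k n : ℕ) :
    ∑ m ∈ range n, (shiftedAtomCdf s m k - shiftedAtomCdf s (m + 1) k) ≤ 1 := by
  rw [sum_range_sub' (fun m => shiftedAtomCdf s m k)]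
  exact (sub_le_self _ (clip_nonneg _)).trans (clip_le_one _)

lemma sum_grid_shiftedAtomCdf_sub_succ_le_one (s : ℝ) (m n : ℕ) :
    ∑ k ∈ range n, (shiftedAtomCdf s m k - shiftedAtomCdf s (m + 1) k) ≤ 1 := by
  have hterm : ∀ k, shiftedAtomCdf s m k - shiftedAtomCdf s (m + 1) k
      = clip ((k + 1 : ℕ) - m - s) - clip (k - m - s) := by
    intro k
    simp only [shiftedAtomCdf]
    push_cast
    ring_nf
  rw [sum_congr rfl fun k _ => hterm k, sum_range_sub (fun k => clip (k - m - s))]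
  exact (sub_le_self _ (clip_nonneg _)).trans (clip_le_one _)

theorem sum_sq_sum_mul_le_of_sum_le_one {ι κ : Type*} (s : Finset ι) (t : Finset κ)
    (W : κ → ι → ℝ) (hW : ∀ k ∈ t, ∀ i ∈ s, 0 ≤ W k i)
    (hrow : ∀ k ∈ t, ∑ i ∈ s, W k i ≤ 1) (hcol : ∀ i ∈ s, ∑ k ∈ t, W k i ≤ 1) (R : ι → ℝ) :
    ∑ k ∈ t, (∑ i ∈ s, W k i * R i) ^ 2 ≤ ∑ i ∈ s, R i ^ 2 := by
  have hrow_sq : ∀ k ∈ t, (∑ i ∈ s, W k i * R i) ^ 2 ≤ ∑ i ∈ s, W k i * R i ^ 2 := by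
    intro k hk
    have hnonneg : ∀ i ∈ s, 0 ≤ W k i * R i ^ 2 :=
      fun i hi => mul_nonneg (hW k hk i hi) (sq_nonneg _)
    calc (∑ i ∈ s, W k i * R i) ^ 2
        ≤ (∑ i ∈ s, W k i) * ∑ i ∈ s, W k i * R i ^ 2 :=
          sum_sq_le_sum_mul_sum_of_sq_le_mul s (hW k hk) hnonneg fun i _ => le_of_eq (by ring)
      _ ≤ ∑ i ∈ s, W k i * R i ^ 2 := mul_le_of_le_one_left (sum_nonneg hnonneg) (hrow k hk)
  calc ∑ k ∈ t, (∑ i ∈ s, W k i * R i) ^ 2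
      ≤ ∑ k ∈ t, ∑ i ∈ s, W k i * R i ^ 2 := sum_le_sum hrow_sq
    _ = ∑ i ∈ s, (∑ k ∈ t, W k i) * R i ^ 2 := by rw [sum_comm]; simp_rw [sum_mul]
    _ ≤ ∑ i ∈ s, R i ^ 2 := sum_le_sum fun i hi => mul_le_of_le_one_left (sq_nonneg _) (hcol i hi)

lemma cumul_eq_sum_range {d k : ℕ} (f : ℕ → ℝ) (hk : k < d) :
    cumul (fun j : Fin d => f j) k = ∑ j ∈ range (k + 1), f j := by
  rw [cumul, Fin.sum_univ_eq_sum_range (fun j => if j ≤ k then f j else 0), ← sum_filter]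
  congr 1
  ext j
  simp only [mem_filter, mem_range]
  omega

lemma cumul_sum_mul {d : ℕ} {ι : Type*} (s : Finset ι) (a : ι → ℝ) (v : ι → Fin d → ℝ) (k : ℕ) :
    cumul (fun j => ∑ m ∈ s, a m * v m j) k = ∑ m ∈ s, a m * cumul (v m) k := by
  simp only [cumul, mul_sum, ite_sum_zero, mul_ite, mul_zero]
  exact sum_comm

lemma cumul_sub {d : ℕ} (u v : Fin d → ℝ) (k : ℕ) : cumul (u - v) k = cumul u k - cumul v k := by
  simp only [cumul, ← sum_sub_distrib, Pi.sub_apply]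
  exact sum_congr rfl fun j _ => by split_ifs <;> simp

lemma sum_mul_eq_sum_cumul_mul_sub {d : ℕ} (r : Fin d → ℝ) (hr : ∑ j, r j = 0) (c : ℕ → ℝ) :
    ∑ j, r j * c j = ∑ i ∈ range (d - 1), cumul r i * (c i - c (i + 1)) := by
  have htelescope : ∀ j : Fin d,
      ∑ i ∈ range (d - 1), (if (j : ℕ) ≤ i then c i - c (i + 1) else 0) = c j - c (d - 1) := by
    intro j
    rw [← sum_filter, range_eq_Ico, Ico_filter_le, max_eq_right (Nat.zero_le _)]
    have := sum_Ico_sub (fun i => -c i) (show (j : ℕ) ≤ d - 1 by omega)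
    simp only [neg_sub_neg] at this
    rw [this]
  symm
  calc ∑ i ∈ range (d - 1), cumul r i * (c i - c (i + 1))
      = ∑ j, r j * ∑ i ∈ range (d - 1), (if (j : ℕ) ≤ i then c i - c (i + 1) else 0) := by
        simp only [cumul, sum_mul, mul_sum, ite_mul, mul_ite, zero_mul, mul_zero]
        exact sum_comm
    _ = ∑ j, r j * c j := by
        simp only [htelescope, mul_sub, sum_sub_distrib, ← sum_mul, hr, zero_mul, sub_zero]

noncomputable def cdfVec {d : ℕ} (u : Fin d → ℝ) : EuclideanSpace ℝ (Fin (d - 1)) :=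
  WithLp.toLp 2 fun k => cumul u k

section ellTheta

variable {Δ : ℝ} {d : ℕ}

lemma ellTheta_eq_sqrt_mul_norm (hΔ : 0 ≤ Δ) (u v : Fin d → ℝ) :
    ellTheta Δ u v = √Δ * ‖cdfVec u - cdfVec v‖ := by
  rw [ellTheta, Real.sqrt_mul hΔ, EuclideanSpace.norm_eq,
    ← Fin.sum_univ_eq_sum_range (fun k => (cumul u k - cumul v k) ^ 2)]
  simp [cdfVec, Real.norm_eq_abs, sq_abs]

lemma ellTheta_triangle (hΔ : 0 ≤ Δ) (u v w : Fin d → ℝ) :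
    ellTheta Δ u w ≤ ellTheta Δ u v + ellTheta Δ v w := by
  simp only [ellTheta_eq_sqrt_mul_norm hΔ, ← mul_add]
  exact mul_le_mul_of_nonneg_left (norm_sub_le_norm_sub_add_norm_sub _ _ _) (Real.sqrt_nonneg _)

lemma ellTheta_le_of_sum_sq_le (hΔ : 0 ≤ Δ) {u v u' v' : Fin d → ℝ}
    (h : ∑ k ∈ range (d - 1), (cumul u k - cumul v k) ^ 2
      ≤ ∑ k ∈ range (d - 1), (cumul u' k - cumul v' k) ^ 2) :
    ellTheta Δ u v ≤ ellTheta Δ u' v' :=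
  Real.sqrt_le_sqrt (mul_le_mul_of_nonneg_left h hΔ)

end ellTheta

section shiftMap

variable {θ0 Δ : ℝ} {d : ℕ}

lemma hatFn_eq_clip_sub (hΔ : 0 < Δ) {j : ℕ} (hj0 : j ≠ 0) (hj : j ≠ d - 1) (x : ℝ) :
    hatFn θ0 Δ d j x = clip ((θ0 + (j + 1) * Δ - x) / Δ) - clip ((θ0 + j * Δ - x) / Δ) := by
  have harg : (θ0 + (j + 1) * Δ - x) / Δ = (θ0 + j * Δ - x) / Δ + 1 := by
    field_simp
    ring
  have habs : |x - (θ0 + j * Δ)| / Δ = |(θ0 + j * Δ - x) / Δ| := by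
    rw [abs_div, abs_of_pos hΔ, abs_sub_comm]
  rw [hatFn, if_neg hj0, if_neg hj, habs, harg, clip_add_one_sub_clip]

lemma sum_range_hatFn (hΔ : 0 < Δ) (x : ℝ) {k : ℕ} (hk : k < d - 1) :
    ∑ j ∈ range (k + 1), hatFn θ0 Δ d j x = clip ((θ0 + (k + 1) * Δ - x) / Δ) := by
  induction k with
  | zero => simp [hatFn, clip]
  | succ k ih =>
    rw [sum_range_succ, ih (by omega), hatFn_eq_clip_sub hΔ k.succ_ne_zero (by omega)]
    push_cast
    ring

lemma shiftMap_atom (t : ℝ) (m : Fin d) :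
    shiftMap θ0 Δ d t (atom m) = fun j : Fin d => hatFn θ0 Δ d j (θ0 + m * Δ + t) := by
  ext j
  simp [shiftMap, atom]

lemma cumul_shiftMap_atom (hΔ : 0 < Δ) (t : ℝ) (m : Fin d) {k : ℕ} (hk : k < d - 1) :
    cumul (shiftMap θ0 Δ d t (atom m)) k = shiftedAtomCdf (t / Δ) m k := by
  rw [shiftMap_atom, cumul_eq_sum_range (fun j => hatFn θ0 Δ d j _) (by omega),
    sum_range_hatFn hΔ _ hk, shiftedAtomCdf]
  congr 1
  field_simp
  ring

lemma cumul_shiftMap (t : ℝ) (p : Fin d → ℝ) (k : ℕ) :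
    cumul (shiftMap θ0 Δ d t p) k = ∑ m, p m * cumul (shiftMap θ0 Δ d t (atom m)) k := by
  simp only [shiftMap_atom, ← cumul_sum_mul]
  rfl

lemma ellTheta_shiftMap_atom_le (hΔ : 0 < Δ) (m : Fin d) (b b' : ℝ) :
    ellTheta Δ (shiftMap θ0 Δ d b (atom m)) (shiftMap θ0 Δ d b' (atom m))
      ≤ Δ ^ (-(1 / 2 : ℝ)) * |b - b'| := by
  have hcdf : ∀ k ∈ range (d - 1),
      cumul (shiftMap θ0 Δ d b (atom m)) k - cumul (shiftMap θ0 Δ d b' (atom m)) k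
        = shiftedAtomCdf (b / Δ) m k - shiftedAtomCdf (b' / Δ) m k := fun k hk => by
    rw [cumul_shiftMap_atom hΔ b m (mem_range.1 hk), cumul_shiftMap_atom hΔ b' m (mem_range.1 hk)]
  have hscale : Δ * (b / Δ - b' / Δ) ^ 2 = (b - b') ^ 2 / Δ := by
    field_simp
  rw [ellTheta, sum_congr rfl fun k hk => by rw [hcdf k hk]]
  calc √(Δ * ∑ k ∈ range (d - 1),
          (shiftedAtomCdf (b / Δ) m k - shiftedAtomCdf (b' / Δ) m k) ^ 2)
      ≤ √(Δ * (b / Δ - b' / Δ) ^ 2) :=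
        Real.sqrt_le_sqrt (mul_le_mul_of_nonneg_left (sum_sq_shiftedAtomCdf_sub_le _ _ _ _) hΔ.le)
    _ = Δ ^ (-(1 / 2 : ℝ)) * |b - b'| := by
        rw [hscale, Real.sqrt_div' _ hΔ.le, Real.sqrt_sq_eq_abs, Real.rpow_neg hΔ.le,
          ← Real.sqrt_eq_rpow, div_eq_inv_mul]

lemma ellTheta_shiftMap_le_sum (hΔ : 0 ≤ Δ) (p : Fin d → ℝ) (b b' : ℝ) :
    ellTheta Δ (shiftMap θ0 Δ d b p) (shiftMap θ0 Δ d b' p)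
      ≤ ∑ m, |p m| * ellTheta Δ (shiftMap θ0 Δ d b (atom m)) (shiftMap θ0 Δ d b' (atom m)) := by
  have hvec : ∀ t,
      cdfVec (shiftMap θ0 Δ d t p) = ∑ m, p m • cdfVec (shiftMap θ0 Δ d t (atom m)) := by
    intro t
    ext k
    simp [cdfVec, cumul_shiftMap t p]
  simp only [ellTheta_eq_sqrt_mul_norm hΔ, hvec, ← sum_sub_distrib, ← smul_sub,
    mul_left_comm _ √Δ, ← mul_sum]
  gcongr
  exact (norm_sum_le _ _).trans_eq (by simp [norm_smul])

lemma ellTheta_shiftMap_le (hΔ : 0 < Δ) (t : ℝ) {p q : Fin d → ℝ} (hpq : ∑ j, p j = ∑ j, q j) :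
    ellTheta Δ (shiftMap θ0 Δ d t p) (shiftMap θ0 Δ d t q) ≤ ellTheta Δ p q := by
  set s := t / Δ
  have hdiff : ∀ k ∈ range (d - 1), cumul (shiftMap θ0 Δ d t p) k - cumul (shiftMap θ0 Δ d t q) k
      = ∑ i ∈ range (d - 1),
          (shiftedAtomCdf s i k - shiftedAtomCdf s (i + 1) k) * (cumul p i - cumul q i) := by
    intro k hk
    have habel := sum_mul_eq_sum_cumul_mul_sub (p - q) (by simp [sum_sub_distrib, hpq])
      fun i => shiftedAtomCdf s i k
    simp only [Pi.sub_apply, cumul_sub] at habel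
    simp only [cumul_shiftMap, cumul_shiftMap_atom hΔ t _ (mem_range.1 hk), ← sum_sub_distrib,
      ← sub_mul]
    exact habel.trans (sum_congr rfl fun i _ => mul_comm _ _)
  apply ellTheta_le_of_sum_sq_le hΔ.le
  rw [sum_congr rfl fun k hk => by rw [hdiff k hk]]
  exact sum_sq_sum_mul_le_of_sum_le_one _ _ _
    (fun k _ i _ => sub_nonneg.2 (shiftedAtomCdf_succ_le s i k))
    (fun k _ => sum_atoms_shiftedAtomCdf_sub_succ_le_one s k _)
    (fun i _ => sum_grid_shiftedAtomCdf_sub_succ_le_one s i _) _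

end shiftMap

theorem shiftMap_lipschitz_general
    (θ0 Δ : ℝ) (hΔ : 0 < Δ) (d : ℕ) :
    (∀ (m : Fin d) (b b' : ℝ),
      ellTheta Δ (shiftMap θ0 Δ d b (atom m)) (shiftMap θ0 Δ d b' (atom m))
        ≤ Δ ^ (-(1 / 2 : ℝ)) * |b - b'|)
    ∧ (∀ (p q : Fin d → ℝ), p ∈ stdSimplex ℝ (Fin d) → q ∈ stdSimplex ℝ (Fin d) →
        ∀ (b b' : ℝ),
        ellTheta Δ (shiftMap θ0 Δ d b p) (shiftMap θ0 Δ d b' q)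
          ≤ ellTheta Δ p q + Δ ^ (-(1 / 2 : ℝ)) * |b - b'|) := by
  refine ⟨ellTheta_shiftMap_atom_le hΔ, fun p q hp hq b b' => ?_⟩
  calc ellTheta Δ (shiftMap θ0 Δ d b p) (shiftMap θ0 Δ d b' q)
      ≤ ellTheta Δ (shiftMap θ0 Δ d b p) (shiftMap θ0 Δ d b' p)
        + ellTheta Δ (shiftMap θ0 Δ d b' p) (shiftMap θ0 Δ d b' q) :=
          ellTheta_triangle hΔ.le _ _ _
    _ ≤ ∑ m, p m * (Δ ^ (-(1 / 2 : ℝ)) * |b - b'|) + ellTheta Δ p q := by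
        gcongr
        · refine (ellTheta_shiftMap_le_sum hΔ.le p b b').trans (sum_le_sum fun m _ => ?_)
          rw [abs_of_nonneg (hp.1 m)]
          exact mul_le_mul_of_nonneg_left (ellTheta_shiftMap_atom_le hΔ m b b') (hp.1 m)
        · exact ellTheta_shiftMap_le hΔ b' (hp.2.trans hq.2.symm)
    _ = ellTheta Δ p q + Δ ^ (-(1 / 2 : ℝ)) * |b - b'| := by
        rw [← sum_mul, hp.2, one_mul, add_comm]

/-- the categorical shift map is `Δ^{-1/2}`-Lipschitz in the
shift on single atoms, and more generally
`ℓ^Θ_C(L_b p, L_{b'} q) ≤ ℓ^Θ_C(p, q) + Δ^{−1/2}|b − b'|`. -/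
theorem shiftMap_lipschitz
    (θ0 Δ : ℝ) (hΔ : 0 < Δ) (d : ℕ) (hd : 2 ≤ d) :
    (∀ (m : Fin d) (b b' : ℝ),
      ellTheta Δ (shiftMap θ0 Δ d b (atom m)) (shiftMap θ0 Δ d b' (atom m))
        ≤ Δ ^ (-(1 / 2 : ℝ)) * |b - b'|)
    ∧ (∀ (p q : Fin d → ℝ), p ∈ stdSimplex ℝ (Fin d) → q ∈ stdSimplex ℝ (Fin d) →
        ∀ (b b' : ℝ),
        ellTheta Δ (shiftMap θ0 Δ d b p) (shiftMap θ0 Δ d b' q)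
          ≤ ellTheta Δ p q + Δ ^ (-(1 / 2 : ℝ)) * |b - b'|) :=
  shiftMap_lipschitz_general θ0 Δ hΔ d
end

section
/- Piecewise-affine cumulative-coordinate derivative bound: fix m and let v_m(t) ∈ ℝ^{d−1} be the vector of cumulative masses (F_{L_t e_m}(θ_k))_{k=1}^{d−1} of the projected shifted Dirac L_t e_m. Then v_m is piecewise affine in t, constant outside the interval where θ_m + t ∈ [θ_1, θ_d], and wherever differentiable satisfies ‖dv_m/dt‖_2 ≤ 1/Δ. Consequently ‖v_m(b) − v_m(b')‖_2 ≤ |b − b'|/Δ for all b, b' ∈ ℝ. -/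
noncomputable def cl (u : ℝ) : ℝ := min 1 (max 0 u)

lemma cl_step (u : ℝ) : cl u + max 0 (1 - |u|) = cl (u + 1) := by
  unfold cl
  rcases abs_cases u with ⟨h1, h2⟩ | ⟨h1, h2⟩ <;>
    [skip; skip] <;> simp only [min_def, max_def] <;> split_ifs <;> linarith

lemma cl_compl (u : ℝ) : cl u + cl (1 - u) = 1 := by
  unfold cl; simp only [min_def, max_def]; split_ifs <;> linarith

lemma cl_of_nonpos {u : ℝ} (h : u ≤ 0) : cl u = 0 := by
  unfold cl; simp only [min_def, max_def]; split_ifs <;> linarith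

lemma cl_of_one_le {u : ℝ} (h : 1 ≤ u) : cl u = 1 := by
  unfold cl; simp only [min_def, max_def]; split_ifs <;> linarith

lemma cl_of_mem {u : ℝ} (h0 : 0 ≤ u) (h1 : u ≤ 1) : cl u = u := by
  unfold cl; simp only [min_def, max_def]; split_ifs <;> linarith

lemma cl_mono {a b : ℝ} (h : a ≤ b) : cl a ≤ cl b := by
  unfold cl; simp only [min_def, max_def]; split_ifs <;> linarith

lemma cl_lip {a b : ℝ} (h : a ≤ b) : cl b - cl a ≤ b - a := by
  unfold cl; simp only [min_def, max_def]; split_ifs <;> linarith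

lemma clN_step (n : ℝ) (hn : 0 ≤ n) (s : ℝ) :
    min n (max 0 s) + min 1 (max 0 (s + 1)) = min (n + 1) (max 0 (s + 1)) := by
  simp only [min_def, max_def]; split_ifs <;> linarith

lemma sumS (n : ℕ) (c : ℝ) :
    ∑ k ∈ Finset.range n, cl (c + k) = min (n : ℝ) (max 0 (c + n - 1)) := by
  induction n with
  | zero => simp [min_eq_left (le_max_left 0 _)]
  | succ n ih =>
      rw [Finset.sum_range_succ, ih]
      unfold cl
      push_cast
      have := clN_step (n : ℝ) (by positivity) (c + n - 1)
      have e1 : c + (n:ℝ) - 1 + 1 = c + n := by ring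
      have e2 : c + ((n:ℝ) + 1) - 1 = c + n := by ring
      rw [e1] at this
      rw [e2, this]

lemma l2_clamp_aux (n : ℕ) {c c' : ℝ} (h : c' ≤ c) :
    ∑ k ∈ Finset.range n, (cl (c + k) - cl (c' + k)) ^ 2 ≤ (c - c') ^ 2 := by
  have hsum : ∑ k ∈ Finset.range n, (cl (c + k) - cl (c' + k)) ≤ c - c' := by
    rw [Finset.sum_sub_distrib, sumS, sumS]
    simp only [min_def, max_def]; split_ifs <;> linarith
  have hterm : ∀ k ∈ Finset.range n,
      (cl (c + k) - cl (c' + k)) ^ 2 ≤ (cl (c + k) - cl (c' + k)) * (c - c') := by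
    intro k _
    have h1 : cl (c' + k) ≤ cl (c + k) := cl_mono (by linarith)
    have h2 : cl (c + k) - cl (c' + k) ≤ c - c' := by
      have := cl_lip (a := c' + k) (b := c + k) (by linarith)
      linarith
    nlinarith
  calc ∑ k ∈ Finset.range n, (cl (c + k) - cl (c' + k)) ^ 2
      ≤ ∑ k ∈ Finset.range n, (cl (c + k) - cl (c' + k)) * (c - c') :=
        Finset.sum_le_sum hterm
    _ = (∑ k ∈ Finset.range n, (cl (c + k) - cl (c' + k))) * (c - c') := by
        rw [Finset.sum_mul]
    _ ≤ (c - c') * (c - c') := by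
        apply mul_le_mul_of_nonneg_right hsum (by linarith)
    _ = (c - c') ^ 2 := by ring

lemma l2_clamp (n : ℕ) (c c' : ℝ) :
    Real.sqrt (∑ k ∈ Finset.range n, (cl (c + k) - cl (c' + k)) ^ 2) ≤ |c - c'| := by
  have key : ∑ k ∈ Finset.range n, (cl (c + k) - cl (c' + k)) ^ 2 ≤ (c - c') ^ 2 := by
    rcases le_total c' c with h | h
    · exact l2_clamp_aux n h
    · have := l2_clamp_aux n h
      calc ∑ k ∈ Finset.range n, (cl (c + k) - cl (c' + k)) ^ 2
          = ∑ k ∈ Finset.range n, (cl (c' + k) - cl (c + k)) ^ 2 := by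
            apply Finset.sum_congr rfl; intro k _; ring
        _ ≤ (c' - c) ^ 2 := this
        _ = (c - c') ^ 2 := by ring
  calc Real.sqrt (∑ k ∈ Finset.range n, (cl (c + k) - cl (c' + k)) ^ 2)
      ≤ Real.sqrt ((c - c') ^ 2) := Real.sqrt_le_sqrt key
    _ = |c - c'| := Real.sqrt_sq_eq_abs _

lemma shift_atom (θ0 Δ : ℝ) (d : ℕ) (t : ℝ) (m k : Fin d) :
    shiftMap θ0 Δ d t (atom m) k = hatFn θ0 Δ d k (θ0 + (m : ℝ) * Δ + t) := by
  unfold shiftMap atom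
  rw [Finset.sum_eq_single m]
  · simp
  · intro b _ hb; simp [hb]
  · simp

lemma cumul_shift (θ0 Δ : ℝ) (d : ℕ) (t : ℝ) (m : Fin d) (j : ℕ) :
    cumul (shiftMap θ0 Δ d t (atom m)) j
      = ∑ i ∈ Finset.range d, if i ≤ j then hatFn θ0 Δ d i (θ0 + (m : ℝ) * Δ + t) else 0 := by
  unfold cumul
  rw [← Fin.sum_univ_eq_sum_range
    (fun i => if i ≤ j then hatFn θ0 Δ d i (θ0 + (m : ℝ) * Δ + t) else 0) d]
  apply Finset.sum_congr rfl
  intro i _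
  rw [shift_atom]

lemma sum_hat (θ0 Δ : ℝ) (hΔ : 0 < Δ) (d : ℕ) (hd : 2 ≤ d) (x : ℝ) :
    ∀ j, j ≤ d - 2 → ∑ i ∈ Finset.range (j + 1), hatFn θ0 Δ d i x
      = cl ((θ0 + ((j : ℝ) + 1) * Δ - x) / Δ) := by
  intro j
  induction j with
  | zero =>
      intro _
      simp only [Finset.sum_range_one, hatFn, if_pos rfl, cl]
      norm_num
  | succ j ih =>
      intro hj
      rw [Finset.sum_range_succ, ih (by omega)]
      have h1 : (j + 1 : ℕ) ≠ 0 := by omega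
      have h2 : (j + 1 : ℕ) ≠ d - 1 := by omega
      rw [hatFn, if_neg h1, if_neg h2]
      set u := (θ0 + ((j : ℝ) + 1) * Δ - x) / Δ with hu
      have habs : |x - (θ0 + ((j : ℝ) + 1) * Δ)| / Δ = |u| := by
        rw [hu, abs_div, abs_of_pos hΔ, abs_sub_comm]
      have hcast : ((j + 1 : ℕ) : ℝ) = (j : ℝ) + 1 := by push_cast; ring
      rw [hcast, habs, cl_step]
      congr 1
      rw [hu]
      field_simp
      ring

lemma sum_hat_total (θ0 Δ : ℝ) (hΔ : 0 < Δ) (d : ℕ) (hd : 2 ≤ d) (x : ℝ) :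
    ∑ i ∈ Finset.range d, hatFn θ0 Δ d i x = 1 := by
  obtain ⟨n, rfl⟩ : ∃ n, d = n + 2 := ⟨d - 2, by omega⟩
  rw [Finset.sum_range_succ]
  rw [sum_hat θ0 Δ hΔ (n + 2) hd x n (by omega)]
  have h1 : (n + 1 : ℕ) ≠ 0 := by omega
  have h2 : (n + 1 : ℕ) = (n + 2) - 1 := by omega
  rw [hatFn, if_neg h1, if_pos h2]
  have : (x - (θ0 + (((n + 2 : ℕ) : ℝ) - 2) * Δ)) / Δ
      = 1 - (θ0 + ((n : ℝ) + 1) * Δ - x) / Δ := by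
    push_cast
    field_simp
    ring
  rw [this]
  exact cl_compl _

lemma cumul_closed (θ0 Δ : ℝ) (hΔ : 0 < Δ) (d : ℕ) (hd : 2 ≤ d) (m : Fin d) (t : ℝ)
    (j : ℕ) (hj : j ≤ d - 2) :
    cumul (shiftMap θ0 Δ d t (atom m)) j
      = cl ((θ0 + ((j : ℝ) + 1) * Δ - (θ0 + (m : ℝ) * Δ + t)) / Δ) := by
  rw [cumul_shift]
  rw [Finset.range_eq_Ico,
    ← Finset.sum_Ico_consecutive _ (Nat.zero_le (j + 1)) (show j + 1 ≤ d by omega)]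
  have hA : ∑ i ∈ Finset.Ico 0 (j + 1),
      (if i ≤ j then hatFn θ0 Δ d i (θ0 + (m : ℝ) * Δ + t) else 0)
      = ∑ i ∈ Finset.range (j + 1), hatFn θ0 Δ d i (θ0 + (m : ℝ) * Δ + t) := by
    rw [← Finset.range_eq_Ico]
    apply Finset.sum_congr rfl
    intro i hi
    rw [if_pos (by simpa using Nat.lt_succ_iff.mp (Finset.mem_range.mp hi))]
  have hB : ∑ i ∈ Finset.Ico (j + 1) d,
      (if i ≤ j then hatFn θ0 Δ d i (θ0 + (m : ℝ) * Δ + t) else 0) = 0 := by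
    apply Finset.sum_eq_zero
    intro i hi
    have := Finset.mem_Ico.mp hi
    rw [if_neg (by omega)]
  rw [hA, hB, add_zero, sum_hat θ0 Δ hΔ d hd _ j hj]

lemma cumul_total (θ0 Δ : ℝ) (hΔ : 0 < Δ) (d : ℕ) (hd : 2 ≤ d) (m : Fin d) (t : ℝ)
    (j : ℕ) (hj : d - 1 ≤ j) :
    cumul (shiftMap θ0 Δ d t (atom m)) j = 1 := by
  rw [cumul_shift]
  rw [Finset.sum_congr rfl (fun i hi => if_pos (by
    have := Finset.mem_range.mp hi; omega))]
  exact sum_hat_total θ0 Δ hΔ d hd _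

/-- the cumulative-coordinate curve
`v_m(t) = (F_{L_t e_m}(θ_k))_{k<d−1}` of the projected shifted Dirac is
affine on each grid cell, constant outside the interval where
`θ_m + t ∈ [θ_1, θ_d]`, and globally `(1/Δ)`-Lipschitz. -/
theorem shifted_atom_cumulative_lipschitz
    (θ0 Δ : ℝ) (hΔ : 0 < Δ) (d : ℕ) (hd : 2 ≤ d) (m : Fin d) :
    -- affine on each cell [θ_k, θ_{k+1}]
    (∀ k : ℕ, k ≤ d - 2 → ∀ t t' a : ℝ, 0 ≤ a → a ≤ 1 →
      θ0 + (k : ℝ) * Δ ≤ θ0 + (m : ℝ) * Δ + t →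
      θ0 + (m : ℝ) * Δ + t ≤ θ0 + ((k : ℝ) + 1) * Δ →
      θ0 + (k : ℝ) * Δ ≤ θ0 + (m : ℝ) * Δ + t' →
      θ0 + (m : ℝ) * Δ + t' ≤ θ0 + ((k : ℝ) + 1) * Δ →
      ∀ j : ℕ,
        cumul (shiftMap θ0 Δ d (a * t + (1 - a) * t') (atom m)) j
          = a * cumul (shiftMap θ0 Δ d t (atom m)) j
            + (1 - a) * cumul (shiftMap θ0 Δ d t' (atom m)) j)
    -- constant to the left of the grid
    ∧ (∀ b b' : ℝ, θ0 + (m : ℝ) * Δ + b ≤ θ0 → θ0 + (m : ℝ) * Δ + b' ≤ θ0 →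
        ∀ j : ℕ, cumul (shiftMap θ0 Δ d b (atom m)) j
          = cumul (shiftMap θ0 Δ d b' (atom m)) j)
    -- constant to the right of the grid
    ∧ (∀ b b' : ℝ,
        θ0 + ((d : ℝ) - 1) * Δ ≤ θ0 + (m : ℝ) * Δ + b →
        θ0 + ((d : ℝ) - 1) * Δ ≤ θ0 + (m : ℝ) * Δ + b' →
        ∀ j : ℕ, cumul (shiftMap θ0 Δ d b (atom m)) j
          = cumul (shiftMap θ0 Δ d b' (atom m)) j)
    -- global (1/Δ)-Lipschitz bound
    ∧ (∀ b b' : ℝ,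
        Real.sqrt (∑ k ∈ Finset.range (d - 1),
          (cumul (shiftMap θ0 Δ d b (atom m)) k
            - cumul (shiftMap θ0 Δ d b' (atom m)) k) ^ 2)
          ≤ |b - b'| / Δ) := by
  refine ⟨?_, ?_, ?_, ?_⟩
  · -- affine on each cell
    intro k hk t t' a ha0 ha1 h1 h2 h3 h4 j
    by_cases hj : j ≤ d - 2
    · rw [cumul_closed θ0 Δ hΔ d hd m _ j hj, cumul_closed θ0 Δ hΔ d hd m _ j hj,
        cumul_closed θ0 Δ hΔ d hd m _ j hj]
      have hT : θ0 + (m : ℝ) * Δ + (a * t + (1 - a) * t')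
          = a * (θ0 + (m : ℝ) * Δ + t) + (1 - a) * (θ0 + (m : ℝ) * Δ + t') := by ring
      rcases lt_trichotomy j k with hjk | hjk | hjk
    
      · -- j < k : all three values are 0
        have hc : (j : ℝ) + 1 ≤ (k : ℝ) := by exact_mod_cast (show j + 1 ≤ k by omega)
        have e0 : ∀ s : ℝ, θ0 + (k : ℝ) * Δ ≤ θ0 + (m : ℝ) * Δ + s →
            cl ((θ0 + ((j : ℝ) + 1) * Δ - (θ0 + (m : ℝ) * Δ + s)) / Δ) = 0 := by
          intro s hs
          apply cl_of_nonpos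
          apply div_nonpos_of_nonpos_of_nonneg _ hΔ.le
          nlinarith
        rw [e0 t h1, e0 t' h3, e0 _ (by rw [hT]; nlinarith)]
        ring
      · -- j = k : linear on the cell
        subst hjk
        have e1 : ∀ s : ℝ, θ0 + (j : ℝ) * Δ ≤ θ0 + (m : ℝ) * Δ + s →
            θ0 + (m : ℝ) * Δ + s ≤ θ0 + ((j : ℝ) + 1) * Δ →
            cl ((θ0 + ((j : ℝ) + 1) * Δ - (θ0 + (m : ℝ) * Δ + s)) / Δ)
              = (θ0 + ((j : ℝ) + 1) * Δ - (θ0 + (m : ℝ) * Δ + s)) / Δ := by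
          intro s hs1 hs2
          apply cl_of_mem
          · apply div_nonneg _ hΔ.le; linarith
          · rw [div_le_one hΔ]; nlinarith
        rw [e1 t h1 h2, e1 t' h3 h4, e1 _ (by rw [hT]; nlinarith) (by rw [hT]; nlinarith)]
        field_simp
        ring
      · -- k < j : all three values are 1
        have hc : (k : ℝ) + 1 ≤ (j : ℝ) := by exact_mod_cast (show k + 1 ≤ j by omega)
        have e2 : ∀ s : ℝ, θ0 + (m : ℝ) * Δ + s ≤ θ0 + ((k : ℝ) + 1) * Δ →
            cl ((θ0 + ((j : ℝ) + 1) * Δ - (θ0 + (m : ℝ) * Δ + s)) / Δ) = 1 := by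
          intro s hs
          apply cl_of_one_le
          rw [le_div_iff₀ hΔ]; nlinarith
        rw [e2 t h2, e2 t' h4, e2 _ (by rw [hT]; nlinarith)]
        ring
    · rw [cumul_total θ0 Δ hΔ d hd m _ j (by omega),
        cumul_total θ0 Δ hΔ d hd m _ j (by omega),
        cumul_total θ0 Δ hΔ d hd m _ j (by omega)]
      ring
  · -- constant to the left
    intro b b' hb hb' j
    by_cases hj : j ≤ d - 2
    · rw [cumul_closed θ0 Δ hΔ d hd m _ j hj, cumul_closed θ0 Δ hΔ d hd m _ j hj]
      have e : ∀ s : ℝ, θ0 + (m : ℝ) * Δ + s ≤ θ0 →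
          cl ((θ0 + ((j : ℝ) + 1) * Δ - (θ0 + (m : ℝ) * Δ + s)) / Δ) = 1 := by
        intro s hs
        apply cl_of_one_le
        rw [le_div_iff₀ hΔ]
        have : (0 : ℝ) ≤ (j : ℝ) := Nat.cast_nonneg j
        nlinarith
      rw [e b hb, e b' hb']
    · rw [cumul_total θ0 Δ hΔ d hd m _ j (by omega),
        cumul_total θ0 Δ hΔ d hd m _ j (by omega)]
  · -- constant to the right
    intro b b' hb hb' j
    by_cases hj : j ≤ d - 2
    · rw [cumul_closed θ0 Δ hΔ d hd m _ j hj, cumul_closed θ0 Δ hΔ d hd m _ j hj]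
      have hc : (j : ℝ) + 1 ≤ (d : ℝ) - 1 := by
        have h' : (j + 1 : ℕ) ≤ d - 1 := by omega
        have := (Nat.cast_le (α := ℝ)).mpr h'
        rw [Nat.cast_sub (by omega)] at this
        push_cast at this
        linarith
      have e : ∀ s : ℝ, θ0 + ((d : ℝ) - 1) * Δ ≤ θ0 + (m : ℝ) * Δ + s →
          cl ((θ0 + ((j : ℝ) + 1) * Δ - (θ0 + (m : ℝ) * Δ + s)) / Δ) = 0 := by
        intro s hs
        apply cl_of_nonpos
        apply div_nonpos_of_nonpos_of_nonneg _ hΔ.le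
        nlinarith
      rw [e b hb, e b' hb']
    · rw [cumul_total θ0 Δ hΔ d hd m _ j (by omega),
        cumul_total θ0 Δ hΔ d hd m _ j (by omega)]
  · -- Lipschitz
    intro b b'
    set c : ℝ := 1 - (m : ℝ) + (θ0 + (m : ℝ) * Δ) / Δ - (θ0 + (m : ℝ) * Δ + b) / Δ with hc
    have key : ∀ s : ℝ, ∀ k ∈ Finset.range (d - 1),
        cumul (shiftMap θ0 Δ d s (atom m)) k
          = cl ((1 - (m : ℝ) - s / Δ) + (k : ℝ)) := by
      intro s k hkmem
      have hk : k ≤ d - 2 := by have := Finset.mem_range.mp hkmem; omega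
      rw [cumul_closed θ0 Δ hΔ d hd m s k hk]
      congr 1
      field_simp
      ring
    have hsum : ∑ k ∈ Finset.range (d - 1),
        (cumul (shiftMap θ0 Δ d b (atom m)) k - cumul (shiftMap θ0 Δ d b' (atom m)) k) ^ 2
        = ∑ k ∈ Finset.range (d - 1),
        (cl ((1 - (m : ℝ) - b / Δ) + (k : ℝ)) - cl ((1 - (m : ℝ) - b' / Δ) + (k : ℝ))) ^ 2 := by
      apply Finset.sum_congr rfl
      intro k hkmem
      rw [key b k hkmem, key b' k hkmem]
    rw [hsum]
    refine le_trans (l2_clamp (d - 1) _ _) (le_of_eq ?_)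
    have : (1 - (m : ℝ) - b / Δ) - (1 - (m : ℝ) - b' / Δ) = (b' - b) / Δ := by ring
    rw [this, abs_div, abs_of_pos hΔ, abs_sub_comm]
end

section
/- Coupled update non-expansiveness in the product metric: for λ ≥ Δ^{−1/2}, define d_λ((p,g),(q,g')) := ℓ^Θ_{C,∞}(p,q) + λ|g − g'| on Δ_d^S × ℝ. Fix a sample y = (s, r, s') and set Ĥ((p,g), y) := (H_g(p,y), r), where H_g updates only block s to L_{r−g} p_{s'}. Then d_λ(Ĥ((p,g),y), Ĥ((q,g'),y)) ≤ d_λ((p,g),(q,g')) for all (p,g), (q,g'). -/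
/-- Block-supremum coordinate Cramér metric on `Δ_d^S`. -/
noncomputable def ellSup (Δ : ℝ) {S : Type*} [Fintype S] {d : ℕ}
    (p q : S → Fin d → ℝ) : ℝ :=
  ⨆ i, ellTheta Δ (p i) (q i)

/-- coupled update non-expansiveness in the product metric
`d_λ((p,g),(q,g')) = ℓ^Θ_{C,∞}(p,q) + λ|g − g'|` for `λ ≥ Δ^{−1/2}`. The
coupled sampled update `Ĥ((p,g), (s,r,s')) = (H_g(p,y), r)` updates only block
`s` to `L_{r−g} p_{s'}` and replaces the gain coordinate by the sampled reward. -/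
theorem coupled_update_nonexpansive
    {S : Type*} [Fintype S] [Nonempty S] [DecidableEq S]
    (d : ℕ) (Δ : ℝ) (hΔ : 0 < Δ)
    (L : ℝ → (Fin d → ℝ) → (Fin d → ℝ))
    (hLs : ∀ b u, u ∈ stdSimplex ℝ (Fin d) → L b u ∈ stdSimplex ℝ (Fin d))
    (hL : ∀ (b b' : ℝ) (u v : Fin d → ℝ),
      u ∈ stdSimplex ℝ (Fin d) → v ∈ stdSimplex ℝ (Fin d) →
      ellTheta Δ (L b u) (L b' v) ≤ ellTheta Δ u v + Δ ^ (-(1 / 2 : ℝ)) * |b - b'|)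
    (lam : ℝ) (hlam : Δ ^ (-(1 / 2 : ℝ)) ≤ lam)
    (s s' : S) (r : ℝ)
    (p q : S → Fin d → ℝ)
    (hp : ∀ i, p i ∈ stdSimplex ℝ (Fin d)) (hq : ∀ i, q i ∈ stdSimplex ℝ (Fin d))
    (g g' : ℝ) :
    ellSup Δ (Function.update p s (L (r - g) (p s')))
             (Function.update q s (L (r - g') (q s')))
      + lam * |r - r|
      ≤ ellSup Δ p q + lam * |g - g'| := by
  simp only [sub_self, abs_zero, mul_zero, add_zero]
  have hnn : (0:ℝ) ≤ Δ ^ (-(1 / 2 : ℝ)) := Real.rpow_nonneg hΔ.le _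
  have hsup : ∀ i, ellTheta Δ (p i) (q i) ≤ ellSup Δ p q := fun i =>
    le_ciSup (f := fun i => ellTheta Δ (p i) (q i)) (Set.Finite.bddAbove (Set.finite_range _)) i
  rw [ellSup]
  apply ciSup_le
  intro i
  by_cases h : i = s
  · subst h
    simp only [Function.update_self]
    calc ellTheta Δ (L (r - g) (p s')) (L (r - g') (q s'))
        ≤ ellTheta Δ (p s') (q s') + Δ ^ (-(1 / 2 : ℝ)) * |(r - g) - (r - g')| :=
          hL _ _ _ _ (hp s') (hq s')
      _ ≤ ellSup Δ p q + lam * |g - g'| := by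
          have h1 : |(r - g) - (r - g')| = |g - g'| := by
            rw [show (r - g) - (r - g') = -(g - g') by ring, abs_neg]
          rw [h1]
          exact add_le_add (hsup s')
            (mul_le_mul_of_nonneg_right hlam (abs_nonneg _))
  · simp only [Function.update_of_ne h]
    calc ellTheta Δ (p i) (q i) ≤ ellSup Δ p q := hsup i
      _ ≤ ellSup Δ p q + lam * |g - g'| := by
          have : 0 ≤ lam * |g - g'| :=
            mul_nonneg (hnn.trans hlam) (abs_nonneg _)
          linarith
end

section
/- Step-size variance recursion bound: let α_k := (k+1)^{−a} for 1 ≤ k ≤ T with 2/3 < a < 1, and α_k := (k+1)^{−2/3} for k > T, where T ≥ 1 is any integer such that (T+1)^{2/3} − (T+1)^a + (2/3)(T+1)^{−1/3} < 1. Define v_1 = α_1² and v_k = (1 − α_k)² v_{k−1} + α_k². Then v_k ≤ α_k for all k ≥ 1. -/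
open Real

/-- MVT-type bound: `(x+1)^p ≤ x^p + p * x^(p-1)` for `x ≥ 1`, `0 ≤ p ≤ 1`. -/
lemma rpow_succ_le (x : ℝ) (hx : 1 ≤ x) {p : ℝ} (hp0 : 0 ≤ p) (hp1 : p ≤ 1) :
    (x + 1) ^ p ≤ x ^ p + p * x ^ (p - 1) := by
  have hx0 : 0 < x := lt_of_lt_of_le one_pos hx
  have h1 : x + 1 = x * (1 + 1 / x) := by field_simp
  have h2 : (1 + 1 / x) ^ p ≤ 1 + p * (1 / x) :=
    rpow_one_add_le_one_add_mul_self (le_trans (by norm_num : (-1:ℝ) ≤ 0) (by positivity)) hp0 hp1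
  calc (x + 1) ^ p = x ^ p * (1 + 1 / x) ^ p := by
        rw [h1, Real.mul_rpow hx0.le (by positivity)]
    _ ≤ x ^ p * (1 + p * (1 / x)) := by
        exact mul_le_mul_of_nonneg_left h2 (by positivity)
    _ = x ^ p + p * (x ^ p / x) := by ring
    _ = x ^ p + p * x ^ (p - 1) := by
        rw [Real.rpow_sub hx0, Real.rpow_one]

/-- step-size variance recursion bound for the two-phase
schedule `α_k = (k+1)^{−a}` for `1 ≤ k ≤ T` (with `2/3 < a < 1`) and
`α_k = (k+1)^{−2/3}` for `k > T`, where `T ≥ 1` satisfies the transition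
condition `(T+1)^{2/3} − (T+1)^a + (2/3)(T+1)^{−1/3} < 1`. The recursion
`v_1 = α_1²`, `v_k = (1 − α_k)² v_{k−1} + α_k²` obeys `v_k ≤ α_k` for all
`k ≥ 1`. -/
theorem two_phase_variance_recursion_bound
    (a : ℝ) (ha1 : 2 / 3 < a) (ha2 : a < 1)
    (T : ℕ) (hT : 1 ≤ T)
    (hTrans : ((T : ℝ) + 1) ^ (2 / 3 : ℝ) - ((T : ℝ) + 1) ^ a
        + (2 / 3) * ((T : ℝ) + 1) ^ (-(1 / 3) : ℝ) < 1)
    (α : ℕ → ℝ)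
    (hα : ∀ k : ℕ, α k = if k ≤ T then ((k : ℝ) + 1) ^ (-a)
        else ((k : ℝ) + 1) ^ (-(2 / 3) : ℝ))
    (v : ℕ → ℝ)
    (hv1 : v 1 = (α 1) ^ 2)
    (hvrec : ∀ k : ℕ, 2 ≤ k → v k = (1 - α k) ^ 2 * v (k - 1) + (α k) ^ 2) :
    ∀ k : ℕ, 1 ≤ k → v k ≤ α k := by
  have ha0 : 0 < a := lt_trans (by norm_num) ha1
  -- positivity and upper bound of α
  have hαpos : ∀ k : ℕ, 1 ≤ k → 0 < α k := by
    intro k hk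
    rw [hα k]
    split <;> positivity
  have hαlt1 : ∀ k : ℕ, 1 ≤ k → α k < 1 := by
    intro k hk
    have hk1 : (1 : ℝ) < (k : ℝ) + 1 := by
      have : (1 : ℝ) ≤ (k : ℝ) := by exact_mod_cast hk
      linarith
    rw [hα k]
    split
    · exact Real.rpow_lt_one_of_one_lt_of_neg hk1 (by linarith)
    · exact Real.rpow_lt_one_of_one_lt_of_neg hk1 (by norm_num)
  -- key: inverse increments bounded by 1
  have hkey : ∀ k : ℕ, 2 ≤ k → (α k)⁻¹ - (α (k - 1))⁻¹ ≤ 1 := by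
    intro k hk
    have hk1 : (1 : ℝ) ≤ (k : ℝ) := by
      have : (1 : ℕ) ≤ k := le_trans (by norm_num) hk
      exact_mod_cast this
    have hcast : ((k - 1 : ℕ) : ℝ) = (k : ℝ) - 1 := by
      have : (1 : ℕ) ≤ k := le_trans (by norm_num) hk
      push_cast [this]; ring
    rw [hα k, hα (k - 1), hcast]
    have hsub : (k : ℝ) - 1 + 1 = (k : ℝ) := by ring
    rcases le_or_gt k T with h | h
    · -- both in first phase
      have h' : k - 1 ≤ T := le_trans (Nat.sub_le k 1) h
      rw [if_pos h, if_pos h', hsub]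
      rw [Real.rpow_neg (by linarith), Real.rpow_neg (by linarith)]
      rw [inv_inv, inv_inv]
      have hmvt : ((k : ℝ) + 1) ^ a ≤ (k : ℝ) ^ a + a * (k : ℝ) ^ (a - 1) :=
        rpow_succ_le _ hk1 ha0.le ha2.le
      have hle : (k : ℝ) ^ (a - 1) ≤ 1 :=
        Real.rpow_le_one_of_one_le_of_nonpos hk1 (by linarith)
      nlinarith
    · rcases le_or_gt k (T + 1) with h2 | h2
      · -- transition step k = T + 1
        have hkeq : k = T + 1 := le_antisymm h2 h
        have h' : k - 1 ≤ T := by omega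
        rw [if_neg (not_le.mpr h), if_pos h', hsub]
        rw [Real.rpow_neg (by linarith), Real.rpow_neg (by linarith), inv_inv, inv_inv]
        have hkc : (k : ℝ) = (T : ℝ) + 1 := by rw [hkeq]; push_cast; ring
        rw [hkc]
        have hT1 : (1 : ℝ) ≤ (T : ℝ) + 1 := by
          have : (0 : ℝ) ≤ (T : ℝ) := Nat.cast_nonneg T
          linarith
        have hmvt : ((T : ℝ) + 1 + 1) ^ (2/3 : ℝ)
            ≤ ((T : ℝ) + 1) ^ (2/3 : ℝ) + (2/3) * ((T : ℝ) + 1) ^ ((2/3 : ℝ) - 1) :=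
          rpow_succ_le _ hT1 (by norm_num) (by norm_num)
        have hexp : ((2:ℝ)/3 - 1) = -(1/3 : ℝ):= by norm_num
        rw [hexp] at hmvt
        linarith
      · -- both in second phase
        have h' : ¬ (k - 1 ≤ T) := by omega
        rw [if_neg (not_le.mpr h), if_neg h', hsub]
        rw [Real.rpow_neg (by linarith), Real.rpow_neg (by linarith), inv_inv, inv_inv]
        have hmvt : ((k : ℝ) + 1) ^ (2/3 : ℝ)
            ≤ (k : ℝ) ^ (2/3 : ℝ) + (2/3) * (k : ℝ) ^ ((2/3 : ℝ) - 1) :=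
          rpow_succ_le _ hk1 (by norm_num) (by norm_num)
        have hle : (k : ℝ) ^ ((2:ℝ)/3 - 1) ≤ 1 :=
          Real.rpow_le_one_of_one_le_of_nonpos hk1 (by norm_num)
        nlinarith
  -- main induction
  intro k hk
  induction k with
  | zero => omega
  | succ n ih =>
    rcases Nat.lt_or_ge n 1 with hn | hn
    · interval_cases n
      rw [hv1]
      have h1 := hαpos 1 le_rfl
      have h2 := hαlt1 1 le_rfl
      nlinarith
    · have hk2 : 2 ≤ n + 1 := by omega
      have ihv : v n ≤ α n := ih hn
      have hA := hαpos n hn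
      have hB := hαpos (n + 1) (by omega)
      have hB1 := hαlt1 (n + 1) (by omega)
      have hK := hkey (n + 1) hk2
      simp only [Nat.add_sub_cancel] at hK
      -- from hK: α(n+1)⁻¹ - α n⁻¹ ≤ 1 derive α n - α(n+1) ≤ α(n+1) * α n
      have hprod : α n - α (n + 1) ≤ α (n + 1) * α n := by
        have h1 : α (n + 1) * α n * ((α (n + 1))⁻¹ - (α n)⁻¹) = α n - α (n + 1) := by
          field_simp
        have h2 := mul_le_mul_of_nonneg_left hK (mul_pos hB hA).le
        rw [h1, mul_one] at h2
        exact h2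
      rw [hvrec (n + 1) hk2]
      simp only [Nat.add_sub_cancel]
      have hvn0 : (1 - α (n+1))^2 * v n ≤ (1 - α (n+1))^2 * α n :=
        mul_le_mul_of_nonneg_left ihv (by positivity)
      nlinarith [sq_nonneg (1 - α (n+1))]
end
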